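/- arXiv:2301.01330 — 6 statements merged into one kernel-verified Lean document; each statement's English description precedes it below -/
import Mathlib

section
/- Let k be a field, let n ≥ 1 and r ≥ 1, and suppose there are matrices a₁,…,aₙ,b₁,…,bₙ ∈ M_{r×r}(k) such that all pairwise commutators vanish — i.e. aᵢaⱼ = aⱼaᵢ and bᵢbⱼ = bⱼbᵢ for all i,j, and aᵢbⱼ = bⱼaᵢ whenever i ≠ j — while [aᵢ,bᵢ] = aᵢbᵢ − bᵢaᵢ ≠ 0 for every i ∈ {1,…,n}. Then r ≥ n+1. -/
/-!
After extending scalars to an infinite field, choose vectors `u`, `v` with `u ⬝ᵥ [aᵢ, bᵢ] *ᵥ v ≠ 0`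
for every `i`. Put `Θ M = (M *ᵥ v, u ᵥ* M)` and let `ω((x, y), (x', y')) = y ⬝ᵥ x' - y' ⬝ᵥ x`, so
that `ω(Θ N, Θ M) = u ⬝ᵥ [N, M] *ᵥ v`. The `2n` vectors `Θ aᵢ`, `Θ bᵢ` then pair with the
`Θ bᵢ`, `Θ aᵢ` through a diagonal matrix with nonzero entries, so they are independent, and they
lie in the hyperplane `ω(·, Θ 1) = 0`, because `1` commutes with everything. Hence `2n ≤ 2r - 1`.
-/

open Module

namespace Matrix

variable {K n : Type*} [Field K] [Fintype n]

lemma exists_dotProduct_mulVec_ne_zero [Infinite K] {ι m : Type*} [Finite ι] [Fintype m]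
    (C : ι → Matrix m n K) (hC : ∀ i, C i ≠ 0) :
    ∃ u v, ∀ i, u ⬝ᵥ C i *ᵥ v ≠ 0 := by
  classical
  obtain ⟨v, hv⟩ := Submodule.exists_forall_notMem_of_forall_ne_top
    (fun i ↦ LinearMap.ker (C i).mulVecLin) fun i h ↦ hC i <| by
      rwa [LinearMap.ker_eq_top, ← toLin'_apply', LinearEquiv.map_eq_zero_iff] at h
  obtain ⟨u, hu⟩ := Module.Dual.exists_forall_ne_zero_of_forall_exists
    (fun i ↦ (dotProductBilin K K).flip (C i *ᵥ v)) fun i ↦ by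
      obtain ⟨j, hj⟩ := Function.ne_iff.mp (hv i)
      exact ⟨Pi.single j 1, by simpa [single_dotProduct] using hj⟩
  exact ⟨u, v, hu⟩

/-- `z ↦ ω(z, Θ M)`. -/
def commutatorForm (u v : n → K) (M : Matrix n n K) : Dual K ((n → K) × (n → K)) where
  toFun z := z.2 ⬝ᵥ (M *ᵥ v) - (u ᵥ* M) ⬝ᵥ z.1
  map_add' z w := by simp only [Prod.fst_add, Prod.snd_add, add_dotProduct, dotProduct_add]; ring
  map_smul' c z := by simp [smul_dotProduct, dotProduct_smul]; ring

lemma commutatorForm_apply_mulVec_vecMul (u v : n → K) (M N : Matrix n n K) :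
    commutatorForm u v M (N *ᵥ v, u ᵥ* N) = u ⬝ᵥ (N * M - M * N) *ᵥ v := by
  simp only [commutatorForm, LinearMap.coe_mk, AddHom.coe_mk, sub_mulVec, dotProduct_sub,
    dotProduct_mulVec, vecMul_vecMul]

theorem linearIndependent_mulVec_vecMul {ι : Type*} (u v : n → K) (x y : ι → Matrix n n K)
    (hxy : Pairwise fun i j ↦ Commute (x i) (y j))
    (huv : ∀ i, u ⬝ᵥ (x i * y i - y i * x i) *ᵥ v ≠ 0) :
    LinearIndependent K fun i ↦ (x i *ᵥ v, u ᵥ* x i) := by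
  refine .of_pairwise_dual_eq_zero_one _
    (fun i ↦ (u ⬝ᵥ (x i * y i - y i * x i) *ᵥ v)⁻¹ • commutatorForm u v (y i)) ?_ ?_
  · intro i j hij
    simp [commutatorForm_apply_mulVec_vecMul, (hxy hij.symm).eq]
  · intro i
    simp [commutatorForm_apply_mulVec_vecMul, huv i]

theorem card_add_one_le_two_mul_card {ι : Type*} [Fintype ι] [Nonempty ι] (u v : n → K)
    (x y : ι → Matrix n n K) (hxy : Pairwise fun i j ↦ Commute (x i) (y j))
    (huv : ∀ i, u ⬝ᵥ (x i * y i - y i * x i) *ᵥ v ≠ 0) :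
    Fintype.card ι + 1 ≤ 2 * Fintype.card n := by
  classical
  set f := commutatorForm u v 1
  have hu : u ≠ 0 := by
    rintro rfl
    exact huv (Classical.arbitrary ι) (zero_dotProduct _)
  have hf : f ≠ 0 := by
    obtain ⟨j, hj⟩ := Function.ne_iff.mp hu
    refine fun h ↦ hj ?_
    simpa [f, commutatorForm, dotProduct_single] using LinearMap.congr_fun h (Pi.single j 1, 0)
  have hspan : Submodule.span K (Set.range fun i ↦ (x i *ᵥ v, u ᵥ* x i)) ≤ LinearMap.ker f := by
    rw [Submodule.span_le]
    rintro _ ⟨i, rfl⟩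
    simp [f, commutatorForm_apply_mulVec_vecMul]
  calc Fintype.card ι + 1
      = finrank K (Submodule.span K (Set.range fun i ↦ (x i *ᵥ v, u ᵥ* x i))) + 1 := by
        rw [finrank_span_eq_card (linearIndependent_mulVec_vecMul u v x y hxy huv)]
    _ ≤ finrank K (LinearMap.ker f) + 1 := by gcongr; exact Submodule.finrank_mono hspan
    _ = 2 * Fintype.card n := by
        rw [Module.Dual.finrank_ker_add_one_of_ne_zero hf]; simp [two_mul]

end Matrix

theorem min_dim_of_noncommuting_pairs_general (k : Type*) [Field k] (n r : ℕ) (hn : 1 ≤ n)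
    (a b : Fin n → Matrix (Fin r) (Fin r) k)
    (haa : ∀ i j, a i * a j = a j * a i)
    (hbb : ∀ i j, b i * b j = b j * b i)
    (hab : ∀ i j, i ≠ j → a i * b j = b j * a i)
    (hne : ∀ i, a i * b i - b i * a i ≠ 0) :
    n + 1 ≤ r := by
  let φ := (algebraMap k (AlgebraicClosure k)).mapMatrix (m := Fin r)
  have hφ : Function.Injective φ := Matrix.map_injective (algebraMap k _).injective
  let x := Sum.elim (φ ∘ a) (φ ∘ b)
  let y := Sum.elim (φ ∘ b) (φ ∘ a)
  have hxy : Pairwise fun i j ↦ Commute (x i) (y j) := by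
    rintro (i | i) (j | j) hij
    · exact Commute.map (hab i j (Sum.inl_injective.ne_iff.mp hij)) φ
    · exact Commute.map (haa i j) φ
    · exact Commute.map (hbb i j) φ
    · exact Commute.map (hab j i (Sum.inr_injective.ne_iff.mp hij).symm).symm φ
  have hφne i : φ (a i) * φ (b i) ≠ φ (b i) * φ (a i) := by
    rw [← map_mul, ← map_mul, Ne, hφ.eq_iff, ← sub_eq_zero]
    exact hne i
  have hxy_ne : ∀ i, x i * y i - y i * x i ≠ 0 := by
    rintro (i | i)
    · exact sub_ne_zero.mpr (hφne i)
    · exact sub_ne_zero.mpr (hφne i).symm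
  have : Nonempty (Fin n) := ⟨⟨0, hn⟩⟩
  obtain ⟨u, v, huv⟩ := Matrix.exists_dotProduct_mulVec_ne_zero _ hxy_ne
  have hcard := Matrix.card_add_one_le_two_mul_card u v x y hxy huv
  simp only [Fintype.card_sum, Fintype.card_fin] at hcard
  omega

/-- **Theorem 2 (Abért question).** If `a₁,…,aₙ,b₁,…,bₙ` are `r × r` matrices over a field `k`
such that all pairwise commutators vanish except that `[aᵢ, bᵢ] = aᵢbᵢ - bᵢaᵢ ≠ 0` for each `i`,
then `r ≥ n + 1`. -/
theorem min_dim_of_noncommuting_pairs (k : Type*) [Field k] (n r : ℕ) (hn : 1 ≤ n) (hr : 1 ≤ r)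
    (a b : Fin n → Matrix (Fin r) (Fin r) k)
    (haa : ∀ i j, a i * a j = a j * a i)
    (hbb : ∀ i j, b i * b j = b j * b i)
    (hab : ∀ i j, i ≠ j → a i * b j = b j * a i)
    (hne : ∀ i, a i * b i - b i * a i ≠ 0) :
    n + 1 ≤ r :=
  min_dim_of_noncommuting_pairs_general k n r hn a b haa hbb hab hne
end

section
/- Let k be a field, let G₁,…,Gₙ be non-solvable groups, and let G = G₁ × ⋯ × Gₙ be their direct product. If there exists an injective group homomorphism from G into GL_d(k) for some d, then d ≥ 2n. -/
/-!
Extend scalars to the algebraic closure `K` and view the factors as pairwise commuting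
representations `ρᵢ` of `Gᵢ` on `V = K^d` with non-solvable images; induct on `dim V`.
Pick an irreducible subrepresentation `W` of `ρᵢ₀` and let `T ≠ 0` be the sum of the images of
all `Gᵢ₀`-maps `W → V`, which every `ρᵢ` preserves. If `T ≠ V`, each `ρᵢ` has non-solvable image
on `T` or on `V ⧸ T`, because elements acting trivially on both commute. If `T = V`, the factors
`i ≠ i₀` act by post-composition on `U = Hom_{Gᵢ₀}(W, V)` with the same kernels as on `V`;
Schur's lemma gives `dim U * dim W ≤ dim V`, and `dim W ≥ 2` because `ρᵢ₀` is non-solvable on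
`W`, so induction on `U` yields `2 (n - 1) ≤ dim U ≤ dim V / 2`.
-/

open Module

universe u v w

theorem MonoidHom.isSolvable_range_iff {G H : Type*} [Group G] [Group H] (f : G →* H) :
    Group.IsSolvable f.range ↔ ∃ n, derivedSeries G n ≤ f.ker := by
  rw [Group.isSolvable_def]
  refine exists_congr fun n ↦ ?_
  rw [← map_derivedSeries_eq f.rangeRestrict_surjective, Subgroup.map_eq_bot_iff,
    MonoidHom.ker_rangeRestrict]

theorem MonoidHom.commutator_le_ker {G M : Type*} [Group G] [Monoid M] (f : G →* M)
    {N : Subgroup G} (h : ∀ a ∈ N, ∀ b ∈ N, Commute (f a) (f b)) : ⁅N, N⁆ ≤ f.ker := by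
  rw [Subgroup.commutator_le]
  intro a ha b hb
  rw [MonoidHom.mem_ker, commutatorElement_def, map_mul, map_mul, map_mul, (h a ha b hb).eq,
    mul_assoc (f b), ← map_mul, mul_inv_cancel, map_one, mul_one, ← map_mul, mul_inv_cancel,
    map_one]

theorem Module.End.commute_of_range_sub_one_le_le_ker {R M : Type*} [Ring R]
    [AddCommGroup M] [Module R M] {e f : Module.End R M} {X : Submodule R M}
    (he : LinearMap.range (e - 1) ≤ X) (he' : X ≤ LinearMap.ker (e - 1))
    (hf : LinearMap.range (f - 1) ≤ X) (hf' : X ≤ LinearMap.ker (f - 1)) : Commute e f := by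
  have hef : (e - 1) * (f - 1) = 0 := LinearMap.range_le_ker_iff.mp (hf.trans he')
  have hfe : (f - 1) * (e - 1) = 0 := LinearMap.range_le_ker_iff.mp (he.trans hf')
  rw [commute_iff_eq, ← sub_eq_zero,
    show e * f - f * e = (e - 1) * (f - 1) - (f - 1) * (e - 1) by noncomm_ring, hef, hfe, sub_zero]

theorem finrank_span_singleton_le {K M : Type*} [DivisionRing K] [AddCommGroup M] [Module K M]
    (x : M) : finrank K (Submodule.span K {x}) ≤ 1 := by
  simpa using finrank_span_le_card (R := K) ({x} : Set M)

namespace Representation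

variable {k G H V W : Type*} [Field k] [Group G] [Group H] [AddCommGroup V] [Module k V]
  [AddCommGroup W] [Module k W]

section Solvable

theorem ker_asGroupHom (ρ : Representation k G V) : ρ.asGroupHom.ker = ρ.ker := by
  ext g
  simp [MonoidHom.mem_ker, Units.ext_iff, asGroupHom_apply]

theorem isSolvable_range_asGroupHom_iff (ρ : Representation k G V) :
    Group.IsSolvable ρ.asGroupHom.range ↔ ∃ n, derivedSeries G n ≤ ρ.ker := by
  rw [MonoidHom.isSolvable_range_iff, ker_asGroupHom]

theorem isSolvable_of_injective {ρ : Representation k G V} (hρ : Function.Injective ρ)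
    (h : Group.IsSolvable ρ.asGroupHom.range) : Group.IsSolvable G := by
  obtain ⟨n, hn⟩ := ρ.isSolvable_range_asGroupHom_iff.mp h
  exact (Group.isSolvable_def G).mpr ⟨n, le_bot_iff.mp (hn.trans_eq ((ρ.ker_eq_bot_iff).mpr hρ))⟩

theorem isSolvable_range_of_ker_le {ρ : Representation k G V} {σ : Representation k G W}
    (h : σ.ker ≤ ρ.ker) (hσ : Group.IsSolvable σ.asGroupHom.range) :
    Group.IsSolvable ρ.asGroupHom.range := by
  obtain ⟨n, hn⟩ := σ.isSolvable_range_asGroupHom_iff.mp hσ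
  exact ρ.isSolvable_range_asGroupHom_iff.mpr ⟨n, hn.trans h⟩

theorem isSolvable_range_of_commute (ρ : Representation k G V) (h : ∀ a b, Commute (ρ a) (ρ b)) :
    Group.IsSolvable ρ.asGroupHom.range :=
  ρ.isSolvable_range_asGroupHom_iff.mpr ⟨1, ρ.commutator_le_ker fun a _ b _ ↦ h a b⟩

theorem isSolvable_range_of_finrank_le_one [FiniteDimensional k V] (ρ : Representation k G V)
    (h : finrank k V ≤ 1) : Group.IsSolvable ρ.asGroupHom.range := by
  refine ρ.isSolvable_range_of_commute fun a b ↦ ?_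
  rcases Nat.le_one_iff_eq_zero_or_eq_one.mp h with h0 | h1
  · have := finrank_zero_iff.mp h0
    exact Subsingleton.elim _ _
  · obtain ⟨c, hc, -⟩ := LinearMap.existsUnique_eq_smul_id_of_finrank_eq_one h1 (ρ a)
    rw [hc]
    exact (Commute.one_left _).smul_left c

theorem two_le_finrank_of_not_isSolvable [FiniteDimensional k V] {ρ : Representation k G V}
    (h : ¬ Group.IsSolvable ρ.asGroupHom.range) : 2 ≤ finrank k V := by
  by_contra! h'
  exact h (ρ.isSolvable_range_of_finrank_le_one (by omega))

variable (ρ : Representation k G V) (X : Submodule k V) (hX : ∀ g, X ≤ X.comap (ρ g))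

theorem le_ker_sub_one_of_mem_ker_subrepresentation {g : G}
    (hg : g ∈ (ρ.subrepresentation X hX).ker) : X ≤ LinearMap.ker (ρ g - 1) := by
  intro x hx
  have := congr($((MonoidHom.mem_ker).mp hg) ⟨x, hx⟩)
  simpa [sub_eq_zero] using congr(Subtype.val $this)

theorem range_sub_one_le_of_mem_ker_quotient {g : G} (hg : g ∈ (ρ.quotient X hX).ker) :
    LinearMap.range (ρ g - 1) ≤ X := by
  rintro _ ⟨v, rfl⟩
  have := congr($((MonoidHom.mem_ker).mp hg) (Submodule.Quotient.mk v))
  simpa [Submodule.Quotient.eq] using this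

theorem isSolvable_range_of_subrepresentation_of_quotient
    (hX₁ : Group.IsSolvable (ρ.subrepresentation X hX).asGroupHom.range)
    (hX₂ : Group.IsSolvable (ρ.quotient X hX).asGroupHom.range) :
    Group.IsSolvable ρ.asGroupHom.range := by
  obtain ⟨m, hm⟩ := (isSolvable_range_asGroupHom_iff _).mp hX₁
  obtain ⟨n, hn⟩ := (isSolvable_range_asGroupHom_iff _).mp hX₂
  have hle₁ := (derivedSeries_antitone G (le_max_left m n)).trans hm
  have hle₂ := (derivedSeries_antitone G (le_max_right m n)).trans hn
  refine ρ.isSolvable_range_asGroupHom_iff.mpr ⟨max m n + 1, ?_⟩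
  rw [derivedSeries_succ]
  exact ρ.commutator_le_ker fun a ha b hb ↦ Module.End.commute_of_range_sub_one_le_le_ker
    (range_sub_one_le_of_mem_ker_quotient ρ X hX (hle₂ ha))
    (le_ker_sub_one_of_mem_ker_subrepresentation ρ X hX (hle₁ ha))
    (range_sub_one_le_of_mem_ker_quotient ρ X hX (hle₂ hb))
    (le_ker_sub_one_of_mem_ker_subrepresentation ρ X hX (hle₁ hb))

end Solvable

section Commute

variable {ρ : Representation k G V} {σ : Representation k H V} {a : G} {b : H}

theorem commute_subrepresentation {X : Submodule k V} (hρ : ∀ g, X ≤ X.comap (ρ g))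
    (hσ : ∀ h, X ≤ X.comap (σ h)) (hab : Commute (ρ a) (σ b)) :
    Commute (ρ.subrepresentation X hρ a) (σ.subrepresentation X hσ b) :=
  LinearMap.restrict_commute hab (hρ a) (hσ b)

theorem commute_quotient {X : Submodule k V} (hρ : ∀ g, X ≤ X.comap (ρ g))
    (hσ : ∀ h, X ≤ X.comap (σ h)) (hab : Commute (ρ a) (σ b)) :
    Commute (ρ.quotient X hρ a) (σ.quotient X hσ b) := by
  refine Submodule.linearMap_qext _ (LinearMap.ext fun v ↦ ?_)
  simpa [Module.End.mul_apply] using congr(Submodule.Quotient.mk (p := X) ($hab.eq v))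

theorem commute_linHom_trivial (hab : Commute (ρ a) (σ b)) :
    Commute (linHom (trivial k G W) ρ a) (linHom (trivial k H W) σ b) := by
  ext φ w
  simpa [Module.End.mul_apply] using congr($hab.eq (φ w))

end Commute

section Intertwining

variable {τ : Representation k G W} {σ : Representation k G V}

theorem mem_invariants_linHom_iff {φ : W →ₗ[k] V} :
    φ ∈ (linHom τ σ).invariants ↔ ∀ g w, φ (τ g w) = σ g (φ w) := by
  rw [mem_invariants]
  simp only [linHom_apply, mem_linHom_invariants_iff_isIntertwining, isIntertwiningMap_iff]

theorem subtype_mem_invariants_linHom (ρ : Representation k G V) {X : Submodule k V}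
    (hX : ∀ g, X ≤ X.comap (ρ g)) : X.subtype ∈ (linHom (ρ.subrepresentation X hX) ρ).invariants :=
  mem_invariants_linHom_iff.mpr fun _ _ ↦ rfl

theorem le_comap_range_of_mem_invariants_linHom {φ : W →ₗ[k] V}
    (hφ : φ ∈ (linHom τ σ).invariants) (g : G) :
    LinearMap.range φ ≤ (LinearMap.range φ).comap (σ g) := by
  rintro _ ⟨w, rfl⟩
  exact ⟨τ g w, mem_invariants_linHom_iff.mp hφ g w⟩

theorem comp_mem_invariants_linHom {π : Representation k H V}
    (hcomm : ∀ a b, Commute (σ a) (π b)) (b : H) {φ : W →ₗ[k] V}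
    (hφ : φ ∈ (linHom τ σ).invariants) : π b ∘ₗ φ ∈ (linHom τ σ).invariants :=
  mem_invariants_linHom_iff.mpr fun a w ↦ by
    simp [mem_invariants_linHom_iff.mp hφ, ← Module.End.mul_apply, (hcomm a b).eq]

theorem invariants_linHom_le_comap {π : Representation k H V}
    (hcomm : ∀ a b, Commute (σ a) (π b)) (b : H) :
    (linHom τ σ).invariants ≤ (linHom τ σ).invariants.comap (linHom (trivial k H W) π b) :=
  fun φ hφ ↦ by simpa using comp_mem_invariants_linHom hcomm b hφ

end Intertwining

section IsotypicComponent

variable (τ : Representation k G W) (σ : Representation k G V)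

def isotypicComponent : Submodule k V :=
  ⨆ φ ∈ (linHom τ σ).invariants, LinearMap.range φ

theorem range_le_isotypicComponent {φ : W →ₗ[k] V} (hφ : φ ∈ (linHom τ σ).invariants) :
    LinearMap.range φ ≤ isotypicComponent τ σ :=
  le_iSup₂_of_le φ hφ le_rfl

theorem isotypicComponent_le_comap_of_forall {e : Module.End k V}
    (he : ∀ φ ∈ (linHom τ σ).invariants, LinearMap.range (e ∘ₗ φ) ≤ isotypicComponent τ σ) :
    isotypicComponent τ σ ≤ (isotypicComponent τ σ).comap e :=
  iSup₂_le fun φ hφ ↦ by rw [← Submodule.map_le_iff_le_comap, ← LinearMap.range_comp]; exact he φ hφ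

theorem isotypicComponent_le_comap (g : G) :
    isotypicComponent τ σ ≤ (isotypicComponent τ σ).comap (σ g) :=
  isotypicComponent_le_comap_of_forall τ σ fun φ hφ ↦ by
    have : σ g ∘ₗ φ = φ ∘ₗ τ g := LinearMap.ext fun w ↦ (mem_invariants_linHom_iff.mp hφ g w).symm
    rw [this]
    exact (LinearMap.range_comp_le_range _ _).trans (range_le_isotypicComponent τ σ hφ)

theorem isotypicComponent_le_comap_of_commute {π : Representation k H V}
    (hcomm : ∀ a b, Commute (σ a) (π b)) (b : H) :
    isotypicComponent τ σ ≤ (isotypicComponent τ σ).comap (π b) :=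
  isotypicComponent_le_comap_of_forall τ σ fun _ hφ ↦
    range_le_isotypicComponent τ σ (comp_mem_invariants_linHom hcomm b hφ)

theorem eq_one_of_isotypicComponent_eq_top (hT : isotypicComponent τ σ = ⊤) {e : Module.End k V}
    (he : ∀ φ ∈ (linHom τ σ).invariants, e ∘ₗ φ = φ) : e = 1 := by
  have : isotypicComponent τ σ ≤ LinearMap.ker (e - 1) := iSup₂_le fun φ hφ ↦ by
    rw [LinearMap.range_le_ker_iff, LinearMap.sub_comp, he φ hφ, Module.End.one_eq_id,
      LinearMap.id_comp, sub_self]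
  rwa [hT, top_le_iff, LinearMap.ker_eq_top, sub_eq_zero] at this

end IsotypicComponent

section Irreducible

theorem exists_isIrreducible_subrepresentation [FiniteDimensional k V] [Nontrivial V]
    (σ : Representation k G V) :
    ∃ (X : Submodule k V) (hX : ∀ g, X ≤ X.comap (σ g)),
      (σ.subrepresentation X hX).IsIrreducible := by
  obtain ⟨X, ⟨hX0, hX⟩, hmin⟩ := wellFounded_lt.has_min
    {X : Submodule k V | X ≠ ⊥ ∧ ∀ g, X ≤ X.comap (σ g)} ⟨⊤, top_ne_bot, fun _ ↦ le_top⟩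
  have : Nontrivial X := Submodule.nontrivial_iff_ne_bot.mpr hX0
  refine ⟨X, hX, ?_⟩
  have : Nontrivial (Subrepresentation (σ.subrepresentation X hX)) :=
    ⟨⊥, ⊤, fun h ↦ bot_ne_top congr(Subrepresentation.toSubmodule $h)⟩
  refine ⟨fun Y ↦ ?_⟩
  set Y' := Y.toSubmodule.map X.subtype
  have hY' : ∀ g, Y' ≤ Y'.comap (σ g) := by
    rintro g _ ⟨y, hy, rfl⟩
    exact ⟨_, Y.apply_mem_toSubmodule g hy, rfl⟩
  by_cases hY : Y' = ⊥
  · left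
    exact Subrepresentation.toSubmodule_injective <|
      Submodule.map_injective_of_injective X.injective_subtype (hY.trans (Submodule.map_bot _).symm)
  · right
    have : Y' = X := (Submodule.map_subtype_le _ _).eq_of_not_lt (hmin _ ⟨hY, hY'⟩)
    exact Subrepresentation.toSubmodule_injective <|
      Submodule.map_injective_of_injective X.injective_subtype
        (this.trans (Submodule.map_subtype_top X).symm)

theorem IsIrreducible.nontrivial (τ : Representation k G W) [τ.IsIrreducible] : Nontrivial W := by
  by_contra h
  rw [not_nontrivial_iff_subsingleton] at h
  exact bot_ne_top (α := Subrepresentation τ) (Subrepresentation.toSubmodule_injective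
    (Subsingleton.elim _ _))

variable {τ : Representation k G W} [τ.IsIrreducible] {σ : Representation k G V}

theorem IsIrreducible.injective_of_mem_invariants_linHom {φ : W →ₗ[k] V}
    (hφ : φ ∈ (linHom τ σ).invariants) (hφ0 : φ ≠ 0) : Function.Injective φ := by
  refine (IsIrreducible.injective_or_eq_zero
    (φ.intertwiningMap_of_isIntertwiningMap τ σ (mem_invariants_linHom_iff.mp hφ))).resolve_right
    fun h ↦ hφ0 ?_
  ext w
  exact congr($h w)

variable [IsAlgClosed k] [FiniteDimensional k W]

theorem IsIrreducible.exists_eq_smul_id {s : W →ₗ[k] W} (hs : ∀ g w, s (τ g w) = τ g (s w)) :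
    ∃ c : k, s = c • LinearMap.id := by
  obtain ⟨c, hc⟩ := algebraMap_intertwiningMap_bijective_of_isAlgClosed.2
    (s.intertwiningMap_of_isIntertwiningMap τ τ hs)
  refine ⟨c, LinearMap.ext fun w ↦ ?_⟩
  simpa [Algebra.algebraMap_eq_smul_one] using congr($hc w).symm

theorem IsIrreducible.exists_eq_smul_of_range_le {φ ψ : W →ₗ[k] V}
    (hφ : φ ∈ (linHom τ σ).invariants) (hψ : ψ ∈ (linHom τ σ).invariants)
    (hφinj : Function.Injective φ) (hle : LinearMap.range ψ ≤ LinearMap.range φ) :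
    ∃ c : k, ψ = c • φ := by
  obtain ⟨π, hπ⟩ := φ.exists_leftInverse_of_injective (LinearMap.ker_eq_bot.mpr hφinj)
  have hφπ : ∀ w, φ (π (ψ w)) = ψ w := fun w ↦ by
    obtain ⟨w', hw'⟩ := hle ⟨w, rfl⟩
    rw [← hw', ← LinearMap.comp_apply π, hπ, LinearMap.id_apply]
  obtain ⟨c, hc⟩ := IsIrreducible.exists_eq_smul_id (τ := τ) (s := π ∘ₗ ψ) fun g w ↦ hφinj <| by
    rw [LinearMap.comp_apply, LinearMap.comp_apply, hφπ, mem_invariants_linHom_iff.mp hφ, hφπ,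
      mem_invariants_linHom_iff.mp hψ]
  refine ⟨c, LinearMap.ext fun w ↦ ?_⟩
  rw [← hφπ w, ← LinearMap.comp_apply π, hc]
  simp

/-- Left exactness of `Hom(τ, -)` along `0 → range φ → V → V ⧸ range φ`, where
`Hom(τ, range φ)` is a line by Schur's lemma. -/
theorem finrank_invariants_linHom_le_quotient_add_one [FiniteDimensional k V] {φ : W →ₗ[k] V}
    (hφ : φ ∈ (linHom τ σ).invariants) (hφinj : Function.Injective φ) :
    finrank k (linHom τ σ).invariants ≤ finrank k
      (linHom τ (σ.quotient _ (le_comap_range_of_mem_invariants_linHom hφ))).invariants + 1 := by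
  set X := LinearMap.range φ
  set U' := (linHom τ (σ.quotient X (le_comap_range_of_mem_invariants_linHom hφ))).invariants
  let Q : (linHom τ σ).invariants →ₗ[k] U' :=
    (LinearMap.compRight k X.mkQ).restrict fun ψ hψ ↦ mem_invariants_linHom_iff.mpr fun g w ↦ by
      simp [mem_invariants_linHom_iff.mp hψ]
  have hker : LinearMap.ker Q ≤ Submodule.span k {⟨φ, hφ⟩} := by
    intro ψ hψ
    have hψX : LinearMap.range ψ.1 ≤ X := by
      rw [← X.ker_mkQ, LinearMap.range_le_ker_iff]
      exact congr(Subtype.val $((LinearMap.mem_ker).mp hψ))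
    obtain ⟨c, hc⟩ := IsIrreducible.exists_eq_smul_of_range_le hφ ψ.2 hφinj hψX
    exact Submodule.mem_span_singleton.mpr ⟨c, Subtype.ext hc.symm⟩
  rw [← LinearMap.finrank_range_add_finrank_ker (K := k) (V := (linHom τ σ).invariants)
    (V₂ := U') Q]
  exact add_le_add (Submodule.finrank_le _)
    ((Submodule.finrank_mono hker).trans (finrank_span_singleton_le _))

theorem finrank_invariants_linHom_mul_finrank_le [FiniteDimensional k V] :
    finrank k (linHom τ σ).invariants * finrank k W ≤ finrank k V := by
  induction hd : finrank k V using Nat.strong_induction_on generalizing V with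
  | _ d ih =>
  by_cases hU : (linHom τ σ).invariants = ⊥
  · simp [Submodule.finrank_eq_zero.mpr hU]
  obtain ⟨φ, hφ, hφ0⟩ := Submodule.exists_mem_ne_zero_of_ne_bot hU
  have hφinj := IsIrreducible.injective_of_mem_invariants_linHom hφ hφ0
  have hW : 0 < finrank k W := by
    have : Nontrivial W := IsIrreducible.nontrivial τ
    exact finrank_pos
  have hdim : finrank k (V ⧸ LinearMap.range φ) + finrank k W = d := by
    rw [← hd, ← (LinearMap.range φ).finrank_quotient_add_finrank,
      LinearMap.finrank_range_of_inj hφinj]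
  have hQ := ih _ (by omega) rfl (σ := σ.quotient _ (le_comap_range_of_mem_invariants_linHom hφ))
  have hU' := finrank_invariants_linHom_le_quotient_add_one hφ hφinj
  nlinarith

end Irreducible

end Representation

section CommutingNonsolvableBound

open Representation

variable (k : Type*) [Field k] (V : Type u) [AddCommGroup V] [Module k V]

def CommutingNonsolvableBound : Prop :=
  ∀ (ι : Type w) [Fintype ι] (G : ι → Type v) [∀ i, Group (G i)]
    (ρ : ∀ i, Representation k (G i) V),
    Pairwise (fun i j ↦ ∀ a b, Commute (ρ i a) (ρ j b)) →
    (∀ i, ¬ Group.IsSolvable (ρ i).asGroupHom.range) → 2 * Fintype.card ι ≤ finrank k V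

variable {k V} {ι : Type w} [Fintype ι] {G : ι → Type v} [∀ i, Group (G i)]
  (ρ : ∀ i, Representation k (G i) V)

theorem two_mul_card_le_finrank_of_le_comap [FiniteDimensional k V]
    (hcomm : Pairwise fun i j ↦ ∀ a b, Commute (ρ i a) (ρ j b))
    (hns : ∀ i, ¬ Group.IsSolvable (ρ i).asGroupHom.range) (X : Submodule k V)
    (hX : ∀ i g, X ≤ X.comap (ρ i g)) (hX₁ : CommutingNonsolvableBound.{u, v, w} k X)
    (hX₂ : CommutingNonsolvableBound.{u, v, w} k (V ⧸ X)) :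
    2 * Fintype.card ι ≤ finrank k V := by
  classical
  set P : ι → Prop := fun i ↦ ¬ Group.IsSolvable ((ρ i).subrepresentation X (hX i)).asGroupHom.range
  set Q : ι → Prop := fun i ↦ ¬ Group.IsSolvable ((ρ i).quotient X (hX i)).asGroupHom.range
  have hP := hX₁ {i // P i} (fun i ↦ G i) (fun i ↦ (ρ i).subrepresentation X (hX i))
    (fun i j hij a b ↦ commute_subrepresentation _ _ (hcomm (Subtype.val_injective.ne hij) a b))
    (fun i ↦ i.2)
  have hQ := hX₂ {i // Q i} (fun i ↦ G i) (fun i ↦ (ρ i).quotient X (hX i))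
    (fun i j hij a b ↦ commute_quotient _ _ (hcomm (Subtype.val_injective.ne hij) a b))
    (fun i ↦ i.2)
  have hPQ : ∀ i, P i ∨ Q i := fun i ↦ or_iff_not_imp_left.mpr fun hP hQ ↦
    hns i (isSolvable_range_of_subrepresentation_of_quotient _ _ _ (not_not.mp hP) hQ)
  have hcard : Fintype.card ι ≤ Fintype.card {i // P i} + Fintype.card {i // Q i} :=
    (Fintype.card_congr (Equiv.subtypeUnivEquiv hPQ).symm).trans_le (Fintype.card_subtype_or P Q)
  have := X.finrank_quotient_add_finrank
  omega

theorem two_mul_card_le_finrank_of_isotypicComponent_eq_top [IsAlgClosed k]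
    [FiniteDimensional k V] (hcomm : Pairwise fun i j ↦ ∀ a b, Commute (ρ i a) (ρ j b))
    (hns : ∀ i, ¬ Group.IsSolvable (ρ i).asGroupHom.range) (i₀ : ι) {W : Type*}
    [AddCommGroup W] [Module k W] [FiniteDimensional k W] (τ : Representation k (G i₀) W)
    [τ.IsIrreducible] (hT : isotypicComponent τ (ρ i₀) = ⊤)
    (hU : finrank k (linHom τ (ρ i₀)).invariants < finrank k V →
      CommutingNonsolvableBound.{_, v, w} k (linHom τ (ρ i₀)).invariants) :
    2 * Fintype.card ι ≤ finrank k V := by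
  classical
  set U := (linHom τ (ρ i₀)).invariants
  have hτ : ¬ Group.IsSolvable τ.asGroupHom.range := fun h ↦ hns i₀ <|
    isSolvable_range_of_ker_le (fun g hg ↦ eq_one_of_isotypicComponent_eq_top τ _ hT fun φ hφ ↦
      LinearMap.ext fun w ↦ by
        simp [← mem_invariants_linHom_iff.mp hφ, (MonoidHom.mem_ker).mp hg]) h
  have hUV : 2 * finrank k U ≤ finrank k V :=
    (Nat.mul_le_mul_right _ (two_le_finrank_of_not_isSolvable hτ)).trans
      (mul_comm (finrank k W) _ ▸ finrank_invariants_linHom_mul_finrank_le)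
  let ρ' (j : {j // j ≠ i₀}) : Representation k (G j) U :=
    (linHom (trivial k (G j) W) (ρ j)).subrepresentation U
      (invariants_linHom_le_comap (hcomm j.2.symm))
  have hρ' : ∀ j, (ρ' j).ker ≤ (ρ j).ker := fun j g hg ↦
    eq_one_of_isotypicComponent_eq_top τ _ hT fun φ hφ ↦ by
      simpa [ρ'] using congr(($((MonoidHom.mem_ker).mp hg) ⟨φ, hφ⟩ : W →ₗ[k] V))
  have hV := two_le_finrank_of_not_isSolvable (hns i₀)
  have hrec := hU (by omega) {j // j ≠ i₀} (fun j ↦ G j) ρ'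
    (fun j l hjl a b ↦ commute_subrepresentation _ _
      (commute_linHom_trivial (hcomm (Subtype.val_injective.ne hjl) a b)))
    (fun j h ↦ hns j (isSolvable_range_of_ker_le (hρ' j) h))
  have hcard : Fintype.card {j // j ≠ i₀} = Fintype.card ι - 1 := by
    rw [Fintype.card_subtype_compl, Fintype.card_subtype_eq]
  have : 0 < Fintype.card ι := Fintype.card_pos_iff.mpr ⟨i₀⟩
  omega

variable (k V) in
theorem commutingNonsolvableBound [IsAlgClosed k] [FiniteDimensional k V] :
    CommutingNonsolvableBound.{u, v, w} k V := by
  induction hd : finrank k V using Nat.strong_induction_on generalizing V with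
  | _ d ih =>
  intro ι _ G _ ρ hcomm hns
  rcases isEmpty_or_nonempty ι with hι | ⟨⟨i₀⟩⟩
  · simp
  have : Nontrivial V :=
    finrank_pos_iff.mp (two_pos.trans_le (two_le_finrank_of_not_isSolvable (hns i₀)))
  obtain ⟨W, hW, hirr⟩ := (ρ i₀).exists_isIrreducible_subrepresentation
  set τ := (ρ i₀).subrepresentation W hW
  set T := isotypicComponent τ (ρ i₀)
  by_cases hT : T = ⊤
  · exact two_mul_card_le_finrank_of_isotypicComponent_eq_top ρ hcomm hns i₀ τ hT
      fun h ↦ ih _ (hd ▸ h) _ rfl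
  have hTinv : ∀ i g, T ≤ T.comap (ρ i g) := fun i ↦ by
    rcases eq_or_ne i₀ i with rfl | hi
    · exact isotypicComponent_le_comap τ (ρ i₀)
    · exact isotypicComponent_le_comap_of_commute τ (ρ i₀) (hcomm hi)
  have hWT : W ≤ T := W.range_subtype ▸
    range_le_isotypicComponent τ _ (subtype_mem_invariants_linHom _ hW)
  have hTbot : T ≠ ⊥ := ne_bot_of_le_ne_bot
    (Submodule.nontrivial_iff_ne_bot.mp (IsIrreducible.nontrivial τ)) hWT
  have hTpos : finrank k T ≠ 0 := fun h ↦ hTbot (Submodule.finrank_eq_zero.mp h)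
  have hTlt := Submodule.finrank_lt hT
  have := T.finrank_quotient_add_finrank
  exact two_mul_card_le_finrank_of_le_comap ρ hcomm hns T hTinv
    (ih (finrank k T) (by omega) T rfl) (ih (finrank k (V ⧸ T)) (by omega) (V ⧸ T) rfl)

end CommutingNonsolvableBound

theorem min_rep_dim_of_product_of_nonsolvable_general (k : Type*) [Field k] (n d : ℕ)
    (G : Fin n → Type*) [∀ i, Group (G i)]
    (hns : ∀ i, ¬ IsSolvable (G i))
    (f : (∀ i, G i) →* GL (Fin d) k) (hf : Function.Injective f) :
    2 * n ≤ d := by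
  let K := AlgebraicClosure k
  let F : (∀ i, G i) →* Module.End K (Fin d → K) :=
    (Matrix.toLinAlgEquiv' : Matrix (Fin d) (Fin d) K ≃ₐ[K] _).toMonoidHom.comp <|
      (algebraMap k K).mapMatrix.toMonoidHom.comp <| (Units.coeHom _).comp f
  have hF : Function.Injective F := Matrix.toLinAlgEquiv'.injective.comp <|
    (Matrix.map_injective (algebraMap k K).injective).comp <| Units.val_injective.comp hf
  have hρ (i : Fin n) : Function.Injective (F.comp (MonoidHom.mulSingle G i)) :=
    hF.comp (Pi.mulSingle_injective i)
  simpa using commutingNonsolvableBound K (Fin d → K) (Fin n) G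
    (fun i ↦ F.comp (MonoidHom.mulSingle G i))
    (fun i j hij a b ↦ (Pi.mulSingle_commute hij a b).map F)
    (fun i h ↦ hns i (Representation.isSolvable_of_injective (hρ i) h))

/-- If `G₁, …, Gₙ` are non-solvable groups and their direct product embeds into `GL_d(k)`,
then `d ≥ 2n`. -/
theorem min_rep_dim_of_product_of_nonsolvable (k : Type*) [Field k] (n d : ℕ) (hn : 1 ≤ n)
    (G : Fin n → Type*) [∀ i, Group (G i)]
    (hns : ∀ i, ¬ IsSolvable (G i))
    (f : (∀ i, G i) →* GL (Fin d) k) (hf : Function.Injective f) :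
    2 * n ≤ d :=
  min_rep_dim_of_product_of_nonsolvable_general k n d G hns f hf
end

section
/- Let k be a field, n ≥ 1, and λ ∈ k with λ ≠ 0. In M_{(n+1)×(n+1)}(k) define aᵢ = I + E_{1,i+1} and bᵢ = I − λE_{i+1,i+1} for i = 1,…,n, where I is the identity matrix and E_{p,q} is the matrix with (p,q)-entry 1 and all other entries 0. Then: aᵢaⱼ = aⱼaᵢ and bᵢbⱼ = bⱼbᵢ for all i,j; aᵢbⱼ = bⱼaᵢ for all i ≠ j; and aᵢbᵢ − bᵢaᵢ = −λE_{1,i+1} ≠ 0 for every i. Moreover, if in addition λ ≠ 1, then all the matrices aᵢ and bᵢ are invertible. -/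
/-!
Each of the matrices is `1 + E` for a single-entry matrix `E`, and `E_{pq} E_{rs}` vanishes
unless `q = r`. Hence all the products between the perturbations vanish except
`E_{1,i+1} E_{i+1,i+1} = E_{1,i+1}`, which produces the commutator of `aᵢ` and `bᵢ`.
For invertibility, `E_{1,i+1}` is nilpotent and `bᵢ` is diagonal with entries `1` and `1 - λ`.
-/

theorem Commute.one_add_one_add {R : Type*} [Semiring R] {x y : R} (h : Commute x y) :
    Commute (1 + x) (1 + y) :=
  (Commute.one_right _).add_right ((Commute.one_left y).add_left h)

namespace Matrix

variable {n R : Type*} [Fintype n] [DecidableEq n]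

theorem commute_single_single_of_ne [Semiring R] {i j k l : n} (hjk : j ≠ k) (hli : l ≠ i)
    (a b : R) : Commute (single i j a) (single k l b) := by
  rw [Commute, SemiconjBy, single_mul_single_of_ne _ _ _ _ hjk, single_mul_single_of_ne _ _ _ _ hli]

omit [Fintype n] in
theorem single_eq_zero_iff [Zero R] {i j : n} {a : R} : single i j a = 0 ↔ a = 0 :=
  ⟨fun h => by simpa using congrFun (congrFun h i) j, fun h => h ▸ single_zero i j⟩

omit [Fintype n] in
theorem one_sub_smul_single_one [Ring R] (i j : n) (c : R) :
    1 - c • single i j 1 = 1 + single i j (-c) := by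
  rw [smul_single, smul_eq_mul, mul_one, sub_eq_add_neg, single_neg]

theorem one_add_single_mul_sub_mul_one_add_single [Ring R] {i j : n} (hij : i ≠ j) (a b : R) :
    (1 + single i j a) * (1 + single j j b) - (1 + single j j b) * (1 + single i j a) =
      single i j (a * b) := by
  simp only [add_mul, mul_add, one_mul, mul_one, single_mul_single_same,
    single_mul_single_of_ne _ j j i hij.symm]
  abel

theorem isUnit_one_add_single_of_ne [Ring R] {i j : n} (hij : i ≠ j) (a : R) :
    IsUnit (1 + single i j a) :=
  IsNilpotent.isUnit_one_add ⟨2, by rw [sq, single_mul_single_of_ne _ _ _ _ hij.symm]⟩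

theorem isUnit_one_add_single_same [CommRing R] (i : n) {a : R} (ha : IsUnit (1 + a)) :
    IsUnit (1 + single i i a) := by
  rw [← diagonal_single, ← diagonal_one, diagonal_add, isUnit_diagonal, Pi.isUnit_iff]
  intro j
  rcases eq_or_ne j i with rfl | hji
  · simpa using ha
  · simp [hji]

end Matrix

open Matrix

/-- Indices are zero-based: row `0` plays the role of row `1` in the paper. -/
theorem sharpness_matrices_general (k : Type*) [Field k] (n : ℕ)
    (lam : k) (hlam : lam ≠ 0)
    (a b : Fin n → Matrix (Fin (n + 1)) (Fin (n + 1)) k)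
    (ha : ∀ i, a i = 1 + Matrix.single 0 i.succ 1)
    (hb : ∀ i, b i = 1 - lam • Matrix.single i.succ i.succ 1) :
    (∀ i j, a i * a j = a j * a i) ∧
    (∀ i j, b i * b j = b j * b i) ∧
    (∀ i j, i ≠ j → a i * b j = b j * a i) ∧
    (∀ i, a i * b i - b i * a i = -lam • Matrix.single 0 i.succ 1) ∧
    (∀ i, a i * b i - b i * a i ≠ 0) ∧
    (lam ≠ 1 → ∀ i, IsUnit (a i) ∧ IsUnit (b i)) := by
  replace hb : ∀ i, b i = 1 + single i.succ i.succ (-lam) := fun i => by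
    rw [hb, one_sub_smul_single_one]
  have hcomm : ∀ i, a i * b i - b i * a i = -lam • single 0 i.succ 1 := fun i => by
    rw [ha, hb, one_add_single_mul_sub_mul_one_add_single (Fin.succ_ne_zero i).symm,
      smul_single, smul_eq_mul, mul_one, one_mul]
  refine ⟨fun i j => ?_, fun i j => ?_, fun i j hij => ?_, hcomm, fun i h => ?_,
    fun hlam1 i => ⟨?_, ?_⟩⟩
  · rw [ha, ha]
    exact (commute_single_single_of_ne (Fin.succ_ne_zero i) (Fin.succ_ne_zero j) _ _)
      |>.one_add_one_add.eq
  · rcases eq_or_ne i j with rfl | hij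
    · rfl
    rw [hb, hb]
    exact (commute_single_single_of_ne (Fin.succ_inj.not.2 hij) (Fin.succ_inj.not.2 hij.symm) _ _)
      |>.one_add_one_add.eq
  · rw [ha, hb]
    exact (commute_single_single_of_ne (Fin.succ_inj.not.2 hij) (Fin.succ_ne_zero j) _ _)
      |>.one_add_one_add.eq
  · rw [hcomm, smul_single, single_eq_zero_iff] at h
    exact hlam (by simpa using h)
  · rw [ha]
    exact isUnit_one_add_single_of_ne (Fin.succ_ne_zero i).symm 1
  · rw [hb]
    exact isUnit_one_add_single_same _ (sub_eq_add_neg 1 lam ▸ (sub_ne_zero.2 hlam1.symm).isUnit)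

/-- Sharpness of the bound `r ≥ n + 1`: the matrices `aᵢ = I + E_{1,i+1}` and
`bᵢ = I - λ E_{i+1,i+1}` in `M_{n+1}(k)` satisfy all the commutation relations, have
`aᵢbᵢ - bᵢaᵢ = -λ E_{1,i+1} ≠ 0`, and are invertible when `λ ≠ 1`.
(Indices are zero-based: row `0` plays the role of row `1` in the paper.) -/
theorem sharpness_matrices (k : Type*) [Field k] (n : ℕ) (hn : 1 ≤ n)
    (lam : k) (hlam : lam ≠ 0)
    (a b : Fin n → Matrix (Fin (n + 1)) (Fin (n + 1)) k)
    (ha : ∀ i, a i = 1 + Matrix.single 0 i.succ 1)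
    (hb : ∀ i, b i = 1 - lam • Matrix.single i.succ i.succ 1) :
    (∀ i j, a i * a j = a j * a i) ∧
    (∀ i j, b i * b j = b j * b i) ∧
    (∀ i j, i ≠ j → a i * b j = b j * a i) ∧
    (∀ i, a i * b i - b i * a i = -lam • Matrix.single 0 i.succ 1) ∧
    (∀ i, a i * b i - b i * a i ≠ 0) ∧
    (lam ≠ 1 → ∀ i, IsUnit (a i) ∧ IsUnit (b i)) :=
  sharpness_matrices_general k n lam hlam a b ha hb
end

section
/- Let k be a field, n ≥ 1, r ≥ 1, and suppose a₁,…,aₙ,b₁,…,bₙ ∈ M_{r×r}(k) satisfy: aᵢaⱼ = aⱼaᵢ and bᵢbⱼ = bⱼbᵢ for all i,j; aᵢbⱼ = bⱼaᵢ for i ≠ j; and aᵢbᵢ ≠ bᵢaᵢ for every i. Then the 2n+1 matrices I, a₁,…,aₙ, b₁,…,bₙ are linearly independent over k. In particular r² ≥ 2n+1. -/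
/-- If `a₁,…,aₙ,b₁,…,bₙ ∈ M_r(k)` satisfy the commutation relations with `aᵢbᵢ ≠ bᵢaᵢ`,
then the `2n + 1` matrices `I, a₁,…,aₙ, b₁,…,bₙ` are linearly independent over `k`;
in particular `r² ≥ 2n + 1`. -/
theorem identity_and_pairs_linearIndependent (k : Type*) [Field k] (n r : ℕ)
    (hn : 1 ≤ n) (hr : 1 ≤ r)
    (a b : Fin n → Matrix (Fin r) (Fin r) k)
    (haa : ∀ i j, a i * a j = a j * a i)
    (hbb : ∀ i j, b i * b j = b j * b i)
    (hab : ∀ i j, i ≠ j → a i * b j = b j * a i)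
    (hne : ∀ i, a i * b i ≠ b i * a i) :
    LinearIndependent k
      (Sum.elim (fun _ : Unit => (1 : Matrix (Fin r) (Fin r) k)) (Sum.elim a b)) ∧
    2 * n + 1 ≤ r * r := by
  have hNe : Nonempty (Fin r) := ⟨⟨0, hr⟩⟩
  have hone : (1 : Matrix (Fin r) (Fin r) k) ≠ 0 := one_ne_zero
  set v := Sum.elim (fun _ : Unit => (1 : Matrix (Fin r) (Fin r) k)) (Sum.elim a b) with hv
  have hlin : LinearIndependent k v := by
    rw [Fintype.linearIndependent_iff]
    intro g hg
    have comm : ∀ m : Matrix (Fin r) (Fin r) k,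
        ∑ i, g i • (v i * m - m * v i) = 0 := by
      intro m
      have h : ∑ i, g i • (v i * m - m * v i)
          = (∑ i, g i • v i) * m - m * ∑ i, g i • v i := by
        rw [Finset.sum_mul, Finset.mul_sum, ← Finset.sum_sub_distrib]
        refine Finset.sum_congr rfl fun i _ => ?_
        rw [smul_sub, smul_mul_assoc, mul_smul_comm]
      rw [h, hg, zero_mul, mul_zero, sub_zero]
    have hga : ∀ j, g (Sum.inr (Sum.inl j)) = 0 := by
      intro j
      have h1 := comm (b j)
      have h2 : ∑ i, g i • (v i * b j - b j * v i)
          = g (Sum.inr (Sum.inl j)) • (a j * b j - b j * a j) := by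
        rw [Finset.sum_eq_single (Sum.inr (Sum.inl j))]
        · simp [v]
        · rintro (u | i | i) _ hne'
          · simp [v]
          · have hij : i ≠ j := by simpa using hne'
            simp [v, hab i j hij]
          · simp [v, hbb i j]
        · intro h; exact absurd (Finset.mem_univ _) h
      rw [h2] at h1
      rcases smul_eq_zero.mp h1 with h | h
      · exact h
      · exact absurd (sub_eq_zero.mp h) (hne j)
    have hgb : ∀ j, g (Sum.inr (Sum.inr j)) = 0 := by
      intro j
      have h1 := comm (a j)
      have h2 : ∑ i, g i • (v i * a j - a j * v i)
          = g (Sum.inr (Sum.inr j)) • (b j * a j - a j * b j) := by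
        rw [Finset.sum_eq_single (Sum.inr (Sum.inr j))]
        · simp [v]
        · rintro (u | i | i) _ hne'
          · simp [v]
          · simp [v, haa i j]
          · have hij : j ≠ i := by
              intro h; exact hne' (by rw [h])
            simp [v, (hab j i hij).symm]
        · intro h; exact absurd (Finset.mem_univ _) h
      rw [h2] at h1
      rcases smul_eq_zero.mp h1 with h | h
      · exact h
      · exact absurd (sub_eq_zero.mp h).symm (hne j)
    have hg0 : g (Sum.inl ()) = 0 := by
      have h2 : ∑ i, g i • v i = g (Sum.inl ()) • (1 : Matrix (Fin r) (Fin r) k) := by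
        rw [Finset.sum_eq_single (Sum.inl ())]
        · simp [v]
        · rintro (u | i | i) _ hne'
          · exact absurd rfl hne'
          · rw [hga i, zero_smul]
          · rw [hgb i, zero_smul]
        · intro h; exact absurd (Finset.mem_univ _) h
      rw [h2] at hg
      rcases smul_eq_zero.mp hg with h | h
      · exact h
      · exact absurd h hone
    rintro (⟨⟩ | i | i)
    · exact hg0
    · exact hga i
    · exact hgb i
  refine ⟨hlin, ?_⟩
  have hcard := hlin.fintype_card_le_finrank
  simp [Module.finrank_matrix] at hcard
  omega
end

section
/- Let k be a field, n ≥ 1, r ≥ 1, and suppose a₁,…,aₙ,b₁,…,bₙ ∈ M_{r×r}(k) satisfy: aᵢaⱼ = aⱼaᵢ and bᵢbⱼ = bⱼbᵢ for all i,j, and aᵢbⱼ = bⱼaᵢ for i ≠ j. Write zᵢ = aᵢbᵢ − bᵢaᵢ. Suppose v ∈ kʳ is a vector with zᵢv ≠ 0 for every i, and α : kʳ → k is a linear form with α(zᵢ v) ≠ 0 for every i. Then the alternating bilinear form β(x,y) = α((xy − yx)v) is non-degenerate on the k-linear span W of {a₁,…,aₙ,b₁,…,bₙ} in M_{r×r}(k);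 that is, for every nonzero x ∈ W there exists y ∈ W with β(x,y) ≠ 0. -/
/-- The alternating form `β(x, y) = α((xy - yx)v)` is non-degenerate on the span `W` of
`{a₁,…,aₙ,b₁,…,bₙ}`, provided `zᵢ v ≠ 0` and `α(zᵢ v) ≠ 0` for all `i`,
where `zᵢ = aᵢbᵢ - bᵢaᵢ`. -/
theorem alternating_form_nondegenerate_on_span (k : Type*) [Field k] (n r : ℕ)
    (hn : 1 ≤ n) (hr : 1 ≤ r)
    (a b : Fin n → Matrix (Fin r) (Fin r) k)
    (haa : ∀ i j, a i * a j = a j * a i)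
    (hbb : ∀ i j, b i * b j = b j * b i)
    (hab : ∀ i j, i ≠ j → a i * b j = b j * a i)
    (v : Fin r → k)
    (hz : ∀ i, (a i * b i - b i * a i).mulVec v ≠ 0)
    (α : (Fin r → k) →ₗ[k] k)
    (hα : ∀ i, α ((a i * b i - b i * a i).mulVec v) ≠ 0) :
    ∀ x ∈ Submodule.span k (Set.range a ∪ Set.range b), x ≠ 0 →
      ∃ y ∈ Submodule.span k (Set.range a ∪ Set.range b),
        α ((x * y - y * x).mulVec v) ≠ 0 := by
  intro x hx hx0
  set f : Fin n ⊕ Fin n → Matrix (Fin r) (Fin r) k := Sum.elim a b with hf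
  have hx' : x ∈ Submodule.span k (Set.range f) := by
    rwa [hf, Set.Sum.elim_range]
  obtain ⟨c, hc⟩ := (Submodule.mem_span_range_iff_exists_fun k).mp hx'
  by_cases hall : ∀ i, c i = 0
  · exact absurd (by rw [← hc]; simp [hall]) hx0
  push_neg at hall
  obtain ⟨i0, hi0⟩ := hall
  have hsum : ∀ y : Matrix (Fin r) (Fin r) k,
      x * y - y * x = ∑ i, c i • (f i * y - y * f i) := by
    intro y
    rw [← hc, Finset.sum_mul, Finset.mul_sum, ← Finset.sum_sub_distrib]
    simp [smul_mul_assoc, mul_smul_comm, smul_sub]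
  obtain (j | j) := i0
  · refine ⟨b j, Submodule.subset_span (Or.inr ⟨j, rfl⟩), ?_⟩
    have h1 : x * b j - b j * x = c (Sum.inl j) • (a j * b j - b j * a j) := by
      rw [hsum]
      rw [Finset.sum_eq_single (Sum.inl j)]
      · simp [f]
      · rintro (i | i) _ hne
        · have hij : i ≠ j := by rintro rfl; exact hne rfl
          simp [f, hab i j hij]
        · simp [f, hbb i j]
      · simp
    rw [h1, Matrix.smul_mulVec, map_smul]
    exact mul_ne_zero hi0 (hα j)
  · refine ⟨a j, Submodule.subset_span (Or.inl ⟨j, rfl⟩), ?_⟩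
    have h1 : x * a j - a j * x = (-c (Sum.inr j)) • (a j * b j - b j * a j) := by
      rw [hsum]
      rw [Finset.sum_eq_single (Sum.inr j)]
      · simp only [f, Sum.elim_inr]; module
      · rintro (i | i) _ hne
        · simp [f, haa i j]
        · have hij : j ≠ i := by rintro rfl; exact hne rfl
          simp [f, hab j i hij]
      · simp
    rw [h1, Matrix.smul_mulVec, map_smul]
    exact mul_ne_zero (neg_ne_zero.mpr hi0) (hα j)
end

section
/- Let n ≥ 1 and, in GL_{n+1}(ℚ), set aᵢ = I + E_{1,i+1} and bᵢ = I − 2E_{i+1,i+1} for i = 1,…,n, and let Gᵢ = ⟨aᵢ, bᵢ⟩ be the subgroup they generate. Then each Gᵢ is non-abelian, every element of Gᵢ commutes with every element of Gⱼ whenever i ≠ j, and the induced multiplication homomorphism G₁ × ⋯ × Gₙ → GL_{n+1}(ℚ), (g₁,…,gₙ) ↦ g₁⋯gₙ, is injective. In particular, the direct product of these n non-abelian groups admits a faithful (n+1)-dimensional representation over ℚ. -/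
/-!
Each `Gᵢ` lies in a copy of the affine group `{!![1, t; 0, s]}` acting on the coordinates `0` and
`i+1`. Writing its elements as `1 + Nᵢ`, we have `Nᵢ * Nⱼ = 0` for `i ≠ j`; hence the copies
commute elementwise, and a product of one element from each copy is `1 + ∑ Nᵢ`, whose entries
`(0, i+1)` and `(i+1, i+1)` give back each pair `(t, s)`. Finally `aᵢ` is a translation and `bᵢ`
the reflection `x ↦ -x`, and these do not commute.
-/

open Matrix

theorem List.prod_ofFn_one_add_of_mul_eq_zero {R : Type*} [Semiring R] :
    ∀ {n : ℕ} (x : Fin n → R), (∀ i j, i < j → x i * x j = 0) →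
      (List.ofFn fun i => 1 + x i).prod = 1 + ∑ i, x i
  | 0, _, _ => by simp
  | n + 1, x, hx => by
    have tail_prod := List.prod_ofFn_one_add_of_mul_eq_zero (fun i => x i.succ)
      fun i j hij => hx _ _ (Fin.succ_lt_succ_iff.2 hij)
    have head_mul_tail : x 0 * ∑ i : Fin n, x i.succ = 0 := by
      rw [Finset.mul_sum]
      exact Finset.sum_eq_zero fun i _ => hx _ _ i.succ_pos
    rw [List.ofFn_succ, List.prod_cons, tail_prod, Fin.sum_univ_succ]
    simp only [add_mul, mul_add, one_mul, mul_one, head_mul_tail]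
    abel

namespace AffineBlock

variable {K : Type*} [Field K] {n : ℕ}

def affinePart (i : Fin n) (t s : K) : Matrix (Fin (n + 1)) (Fin (n + 1)) K :=
  single 0 i.succ t + single i.succ i.succ (s - 1)

/-- `affineMatrix i t s` is the identity except on rows and columns `0, i+1`, where it is the
affine matrix `!![1, t; 0, s]`. -/
def affineMatrix (i : Fin n) (t s : K) : Matrix (Fin (n + 1)) (Fin (n + 1)) K :=
  1 + affinePart i t s

theorem affinePart_apply_zero_succ (i j : Fin n) (t s : K) :
    affinePart i t s 0 j.succ = if i = j then t else 0 := by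
  simp [affinePart, single_apply]

theorem affinePart_apply_succ_succ (i j : Fin n) (t s : K) :
    affinePart i t s j.succ j.succ = if i = j then s - 1 else 0 := by
  simp [affinePart, single_apply, (Fin.succ_ne_zero j).symm]

theorem affinePart_mul_affinePart_of_ne {i j : Fin n} (hij : i ≠ j) (t s t' s' : K) :
    affinePart i t s * affinePart j t' s' = 0 := by
  have hij' : i.succ ≠ j.succ := Fin.succ_injective _ |>.ne hij
  simp [affinePart, add_mul, mul_add, single_mul_single_of_ne, hij', Fin.succ_ne_zero]

theorem affineMatrix_mul_affineMatrix (i : Fin n) (t s t' s' : K) :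
    affineMatrix i t s * affineMatrix i t' s' = affineMatrix i (t' + t * s') (s * s') := by
  simp only [affineMatrix, affinePart, add_mul, mul_add, one_mul, mul_one,
    single_mul_single_same, single_mul_single_of_ne _ _ _ _ (Fin.succ_ne_zero i)]
  rw [show t' + t * s' = t + t' + t * (s' - 1) by ring,
    show s * s' - 1 = s - 1 + (s' - 1) + (s - 1) * (s' - 1) by ring,
    single_add, single_add, single_add, single_add]
  abel

theorem affineMatrix_zero_one (i : Fin n) : affineMatrix i (0 : K) 1 = 1 := by
  simp [affineMatrix, affinePart]

theorem affineMatrix_apply_zero_succ (i : Fin n) (t s : K) :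
    affineMatrix i t s 0 i.succ = t := by
  simp [affineMatrix, affinePart_apply_zero_succ, one_apply_ne (Fin.succ_ne_zero i).symm]

theorem affineMatrix_commute_of_ne {i j : Fin n} (hij : i ≠ j) (t s t' s' : K) :
    Commute (affineMatrix i t s) (affineMatrix j t' s') := by
  simp only [Commute, SemiconjBy, affineMatrix, add_mul, mul_add, one_mul, mul_one,
    affinePart_mul_affinePart_of_ne hij, affinePart_mul_affinePart_of_ne hij.symm]
  abel

theorem list_prod_ofFn_affineMatrix (t s : Fin n → K) :
    (List.ofFn fun i => affineMatrix i (t i) (s i)).prod = 1 + ∑ i, affinePart i (t i) (s i) :=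
  List.prod_ofFn_one_add_of_mul_eq_zero _ fun _ _ hij =>
    affinePart_mul_affinePart_of_ne hij.ne _ _ _ _

theorem eq_of_list_prod_ofFn_affineMatrix_eq {t s t' s' : Fin n → K}
    (h : (List.ofFn fun i => affineMatrix i (t i) (s i)).prod =
      (List.ofFn fun i => affineMatrix i (t' i) (s' i)).prod) :
    t = t' ∧ s = s' := by
  rw [list_prod_ofFn_affineMatrix, list_prod_ofFn_affineMatrix] at h
  constructor <;> funext i
  · simpa [Matrix.sum_apply, affinePart_apply_zero_succ, one_apply_ne (Fin.succ_ne_zero i).symm]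
      using congrFun₂ h 0 i.succ
  · simpa [Matrix.sum_apply, affinePart_apply_succ_succ] using congrFun₂ h i.succ i.succ

def affineUnit (i : Fin n) (t : K) (s : Kˣ) : GL (Fin (n + 1)) K where
  val := affineMatrix i t s
  inv := affineMatrix i (-t * ↑s⁻¹) ↑s⁻¹
  val_inv := by
    rw [affineMatrix_mul_affineMatrix, ← affineMatrix_zero_one i]
    simp
  inv_val := by
    rw [affineMatrix_mul_affineMatrix, ← affineMatrix_zero_one i]
    simp

@[simp]
theorem coe_affineUnit (i : Fin n) (t : K) (s : Kˣ) :
    (affineUnit i t s : Matrix (Fin (n + 1)) (Fin (n + 1)) K) = affineMatrix i t s :=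
  rfl

theorem affineUnit_mul_affineUnit (i : Fin n) (t t' : K) (s s' : Kˣ) :
    affineUnit i t s * affineUnit i t' s' = affineUnit i (t' + t * s') (s * s') :=
  Units.ext (affineMatrix_mul_affineMatrix i t s t' s')

theorem affineUnit_mul_affineUnit_ne {i : Fin n} {t : K} {s : Kˣ} (ht : t ≠ 0) (hs : s ≠ 1) :
    affineUnit i t 1 * affineUnit i 0 s ≠ affineUnit i 0 s * affineUnit i t 1 := by
  intro h
  have := congrArg (fun g : GL (Fin (n + 1)) K => (g : Matrix (Fin (n + 1)) _ K) 0 i.succ) h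
  simp [affineUnit_mul_affineUnit, affineMatrix_apply_zero_succ] at this
  exact hs (Units.ext ((mul_eq_left₀ ht).1 this))

def affineSubgroup (i : Fin n) : Subgroup (GL (Fin (n + 1)) K) where
  carrier := Set.range fun p : K × Kˣ => affineUnit i p.1 p.2
  one_mem' := ⟨(0, 1), Units.ext (affineMatrix_zero_one i)⟩
  mul_mem' := by
    rintro _ _ ⟨⟨t, s⟩, rfl⟩ ⟨⟨t', s'⟩, rfl⟩
    exact ⟨(t' + t * s', s * s'), (affineUnit_mul_affineUnit i t t' s s').symm⟩
  inv_mem' := by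
    rintro _ ⟨⟨t, s⟩, rfl⟩
    exact ⟨(-t * ↑s⁻¹, s⁻¹), Units.ext rfl⟩

theorem affineUnit_mem_affineSubgroup (i : Fin n) (t : K) (s : Kˣ) :
    affineUnit i t s ∈ affineSubgroup i :=
  ⟨(t, s), rfl⟩

theorem commute_of_mem_affineSubgroup {i j : Fin n} (hij : i ≠ j) {x y : GL (Fin (n + 1)) K}
    (hx : x ∈ affineSubgroup i) (hy : y ∈ affineSubgroup j) : Commute x y := by
  obtain ⟨⟨t, s⟩, rfl⟩ := hx
  obtain ⟨⟨t', s'⟩, rfl⟩ := hy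
  exact Units.ext (affineMatrix_commute_of_ne hij t s t' s').eq

theorem injective_list_prod_ofFn_of_le_affineSubgroup
    {G : Fin n → Subgroup (GL (Fin (n + 1)) K)} (hG : ∀ i, G i ≤ affineSubgroup i) :
    Function.Injective fun g : (i : Fin n) → G i =>
      (List.ofFn fun i => (g i : GL (Fin (n + 1)) K)).prod := by
  intro g g' hgg'
  choose p hp using fun i => hG i (g i).2
  choose p' hp' using fun i => hG i (g' i).2
  have hmat := congrArg (Units.coeHom (Matrix (Fin (n + 1)) (Fin (n + 1)) K)) hgg'
  simp only [map_list_prod, List.map_ofFn, Function.comp_def, Units.coeHom_apply, ← hp, ← hp',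
    coe_affineUnit] at hmat
  obtain ⟨ht, hs⟩ := eq_of_list_prod_ofFn_affineMatrix_eq hmat
  funext i
  refine Subtype.ext ?_
  rw [← hp, ← hp', Prod.ext (congrFun ht i) (Units.ext (congrFun hs i))]

end AffineBlock

open AffineBlock in
theorem product_of_nonabelian_groups_in_GL_general (n : ℕ) :
    ∃ a b : Fin n → GL (Fin (n + 1)) ℚ,
      (∀ i, (a i : Matrix (Fin (n + 1)) (Fin (n + 1)) ℚ)
          = 1 + Matrix.single 0 i.succ 1) ∧
      (∀ i, (b i : Matrix (Fin (n + 1)) (Fin (n + 1)) ℚ)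
          = 1 - (2 : ℚ) • Matrix.single i.succ i.succ 1) ∧
      (∀ i, ∃ x ∈ Subgroup.closure {a i, b i}, ∃ y ∈ Subgroup.closure {a i, b i},
        x * y ≠ y * x) ∧
      (∀ i j, i ≠ j → ∀ x ∈ Subgroup.closure {a i, b i},
        ∀ y ∈ Subgroup.closure {a j, b j}, Commute x y) ∧
      Function.Injective
        (fun g : (i : Fin n) → (Subgroup.closure {a i, b i} : Subgroup (GL (Fin (n + 1)) ℚ)) =>
          (List.ofFn fun i => (g i : GL (Fin (n + 1)) ℚ)).prod) := by
  have closure_le (i : Fin n) :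
      Subgroup.closure {affineUnit i (1 : ℚ) 1, affineUnit i 0 (-1)} ≤ affineSubgroup i :=
    (Subgroup.closure_le _).2 <| Set.insert_subset (affineUnit_mem_affineSubgroup i 1 1) <|
      Set.singleton_subset_iff.2 (affineUnit_mem_affineSubgroup i 0 (-1))
  refine ⟨fun i => affineUnit i 1 1, fun i => affineUnit i 0 (-1), fun i => ?_, fun i => ?_,
    fun i => ⟨_, Subgroup.subset_closure (Set.mem_insert _ _), _,
      Subgroup.subset_closure (Set.mem_insert_of_mem _ rfl),
      affineUnit_mul_affineUnit_ne one_ne_zero (by decide)⟩,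
    fun i j hij x hx y hy => commute_of_mem_affineSubgroup hij (closure_le i hx) (closure_le j hy),
    injective_list_prod_ofFn_of_le_affineSubgroup closure_le⟩
  · simp [affineMatrix, affinePart]
  · rw [coe_affineUnit, affineMatrix, affinePart, single_zero, zero_add,
      sub_eq_add_neg (1 : Matrix _ _ ℚ), ← neg_smul, smul_single]
    norm_num

/-- Sharpness over `ℚ`: in `GL_{n+1}(ℚ)` the matrices `aᵢ = I + E_{1,i+1}` and
`bᵢ = I - 2 E_{i+1,i+1}` generate subgroups `Gᵢ = ⟨aᵢ, bᵢ⟩` that are non-abelian,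
commute elementwise with each other, and the multiplication map
`G₁ × ⋯ × Gₙ → GL_{n+1}(ℚ)` is injective; hence the product of these `n` non-abelian
groups has a faithful `(n+1)`-dimensional representation over `ℚ`.
(Indices are zero-based: row `0` plays the role of row `1` in the paper.) -/
theorem product_of_nonabelian_groups_in_GL (n : ℕ) (hn : 1 ≤ n) :
    ∃ a b : Fin n → GL (Fin (n + 1)) ℚ,
      (∀ i, (a i : Matrix (Fin (n + 1)) (Fin (n + 1)) ℚ)
          = 1 + Matrix.single 0 i.succ 1) ∧
      (∀ i, (b i : Matrix (Fin (n + 1)) (Fin (n + 1)) ℚ)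
          = 1 - (2 : ℚ) • Matrix.single i.succ i.succ 1) ∧
      (∀ i, ∃ x ∈ Subgroup.closure {a i, b i}, ∃ y ∈ Subgroup.closure {a i, b i},
        x * y ≠ y * x) ∧
      (∀ i j, i ≠ j → ∀ x ∈ Subgroup.closure {a i, b i},
        ∀ y ∈ Subgroup.closure {a j, b j}, Commute x y) ∧
      Function.Injective
        (fun g : (i : Fin n) → (Subgroup.closure {a i, b i} : Subgroup (GL (Fin (n + 1)) ℚ)) =>
          (List.ofFn fun i => (g i : GL (Fin (n + 1)) ℚ)).prod) :=
  product_of_nonabelian_groups_in_GL_general n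
end
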